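/- Suppose the rewards r(1) > r(2) > ⋯ > r(K) are distinct with |r(a)| ≤ R_max, K ≥ 2, and there exists w ∈ ℝ^d such that Xw preserves the ordering of r. Let (θ_t)_{t≥1} be generated by exact Lin-SPG with constant learning rate η ∈ (0, 4/(9 R_max λ_max(X^⊤X))). Then for every action a ∈ [K], the series Σ_{t=1}^∞ (1 − π_{θ_t}(a)) diverges to infinity. -/

import Mathlib

open scoped BigOperators

/-- Log-linear (softmax) policy `π_θ = softmax(Xθ)`. -/
noncomputable def policy {K d : ℕ} (X : Matrix (Fin K) (Fin d) ℝ) (θ : Fin d → ℝ) (a : Fin K) : ℝ :=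
  Real.exp (∑ j, X a j * θ j) / ∑ b, Real.exp (∑ j, X b j * θ j)

/-- Expected reward `⟨π_θ, r⟩`. -/
noncomputable def expRwd {K d : ℕ} (X : Matrix (Fin K) (Fin d) ℝ) (r : Fin K → ℝ)
    (θ : Fin d → ℝ) : ℝ :=
  ∑ a, policy X θ a * r a

/-- Policy gradient `X^⊤ (diag(π_θ) − π_θ π_θ^⊤) r`. -/
noncomputable def pgrad {K d : ℕ} (X : Matrix (Fin K) (Fin d) ℝ) (r : Fin K → ℝ)
    (θ : Fin d → ℝ) : Fin d → ℝ :=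
  fun j => ∑ a, X a j * (policy X θ a * (r a - expRwd X r θ))

/-- Largest eigenvalue of `XᵀX`. -/
noncomputable def lamMax {K d : ℕ} (X : Matrix (Fin K) (Fin d) ℝ) : ℝ :=
  ⨆ i, (show (Matrix.transpose X * X).IsHermitian by
    rw [← Matrix.conjTranspose_eq_transpose_of_trivial]
    exact Matrix.isHermitian_conjTranspose_mul_self X).eigenvalues i

lemma denom_pos {K d : ℕ} (X : Matrix (Fin K) (Fin d) ℝ) (θ : Fin d → ℝ) (a : Fin K) :
    0 < ∑ b, Real.exp (∑ j, X b j * θ j) :=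
  Finset.sum_pos (fun b _ => Real.exp_pos _) ⟨a, Finset.mem_univ a⟩

lemma policy_pos {K d : ℕ} (X : Matrix (Fin K) (Fin d) ℝ) (θ : Fin d → ℝ) (a : Fin K) :
    0 < policy X θ a :=
  div_pos (Real.exp_pos _) (denom_pos X θ a)

lemma policy_sum {K d : ℕ} (X : Matrix (Fin K) (Fin d) ℝ) (θ : Fin d → ℝ) (a : Fin K) :
    ∑ b, policy X θ b = 1 := by
  unfold policy
  rw [← Finset.sum_div, div_self (ne_of_gt (denom_pos X θ a))]

lemma one_sub_policy {K d : ℕ} (X : Matrix (Fin K) (Fin d) ℝ) (θ : Fin d → ℝ) (a : Fin K) :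
    1 - policy X θ a = ∑ b ∈ Finset.univ.erase a, policy X θ b := by
  have h := Finset.add_sum_erase Finset.univ (policy X θ) (Finset.mem_univ a)
  rw [policy_sum X θ a] at h
  linarith

lemma policy_le_one {K d : ℕ} (X : Matrix (Fin K) (Fin d) ℝ) (θ : Fin d → ℝ) (a : Fin K) :
    policy X θ a ≤ 1 := by
  have h := one_sub_policy X θ a
  have : 0 ≤ ∑ b ∈ Finset.univ.erase a, policy X θ b :=
    Finset.sum_nonneg (fun b _ => (policy_pos X θ b).le)
  linarith

/-- `|V| ≤ Rmax`. -/
lemma expRwd_abs_le {K d : ℕ} (X : Matrix (Fin K) (Fin d) ℝ) (r : Fin K → ℝ)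
    (θ : Fin d → ℝ) (Rmax : ℝ) (hr : ∀ b, |r b| ≤ Rmax) (a : Fin K) :
    |expRwd X r θ| ≤ Rmax := by
  unfold expRwd
  calc |∑ b, policy X θ b * r b| ≤ ∑ b, |policy X θ b * r b| := Finset.abs_sum_le_sum_abs _ _
    _ ≤ ∑ b, policy X θ b * Rmax := by
        apply Finset.sum_le_sum
        intro b _
        rw [abs_mul, abs_of_pos (policy_pos X θ b)]
        exact mul_le_mul_of_nonneg_left (hr b) (policy_pos X θ b).le
    _ = Rmax := by rw [← Finset.sum_mul, policy_sum X θ a, one_mul]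

/-- key bound `Σ_b π b |r b − V| ≤ 4 Rmax (1 − π a)`. -/
lemma Sbd {K d : ℕ} (X : Matrix (Fin K) (Fin d) ℝ) (r : Fin K → ℝ)
    (θ : Fin d → ℝ) (Rmax : ℝ) (hRmax : 0 < Rmax) (hr : ∀ b, |r b| ≤ Rmax) (a : Fin K) :
    ∑ b, policy X θ b * |r b - expRwd X r θ| ≤ 4 * Rmax * (1 - policy X θ a) := by
  set π := policy X θ with hπ
  set V := expRwd X r θ with hV
  have hπpos : ∀ b, 0 < π b := policy_pos X θ
  have hπ1 : ∀ b, π b ≤ 1 := policy_le_one X θ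
  have herase : 1 - π a = ∑ b ∈ Finset.univ.erase a, π b := one_sub_policy X θ a
  -- bound for b = a
  have haV : |r a - V| ≤ 2 * Rmax * (1 - π a) := by
    have hra : ∑ c, π c * (r a - r c) = r a - V := by
      have h1 : (∑ c, π c) = 1 := policy_sum X θ a
      simp only [mul_sub]
      rw [Finset.sum_sub_distrib, ← Finset.sum_mul, h1, one_mul, hV]
      unfold expRwd
      rfl
    rw [← hra]
    calc |∑ c, π c * (r a - r c)| ≤ ∑ c, |π c * (r a - r c)| := Finset.abs_sum_le_sum_abs _ _
      _ = ∑ c ∈ Finset.univ.erase a, |π c * (r a - r c)| := by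
          rw [← Finset.add_sum_erase Finset.univ _ (Finset.mem_univ a)]
          simp
      _ ≤ ∑ c ∈ Finset.univ.erase a, π c * (2 * Rmax) := by
          apply Finset.sum_le_sum
          intro c _
          rw [abs_mul, abs_of_pos (hπpos c)]
          apply mul_le_mul_of_nonneg_left _ (hπpos c).le
          have h1 := hr a; have h2 := hr c
          rw [abs_le] at h1 h2 ⊢
          constructor <;> linarith
      _ = 2 * Rmax * (1 - π a) := by rw [← Finset.sum_mul, ← herase]; ring
  -- crude bound for any b
  have hbV : ∀ b, |r b - V| ≤ 2 * Rmax := by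
    intro b
    have h1 := hr b
    have h2 := expRwd_abs_le X r θ Rmax hr a
    rw [abs_le] at h1 h2 ⊢
    constructor <;> linarith
  calc ∑ b, π b * |r b - V|
      = π a * |r a - V| + ∑ b ∈ Finset.univ.erase a, π b * |r b - V| :=
        (Finset.add_sum_erase Finset.univ _ (Finset.mem_univ a)).symm
    _ ≤ 1 * (2 * Rmax * (1 - π a)) + ∑ b ∈ Finset.univ.erase a, π b * (2 * Rmax) := by
        apply add_le_add
        · exact mul_le_mul (hπ1 a) haV (abs_nonneg _) zero_le_one
        · exact Finset.sum_le_sum fun b _ =>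
            mul_le_mul_of_nonneg_left (hbV b) (hπpos b).le
    _ = 2 * Rmax * (1 - π a) + (1 - π a) * (2 * Rmax) := by
        rw [← Finset.sum_mul, ← herase]; ring
    _ = 4 * Rmax * (1 - π a) := by ring

/-- multiplicative stability of softmax. -/
lemma policy_step {K d : ℕ} (X : Matrix (Fin K) (Fin d) ℝ) (θ θ' : Fin d → ℝ) (δ : ℝ)
    (hδ : ∀ b, |(∑ j, X b j * θ' j) - ∑ j, X b j * θ j| ≤ δ) (b : Fin K) :
    Real.exp (-(2 * δ)) * policy X θ b ≤ policy X θ' b := by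
  unfold policy
  set z : Fin K → ℝ := fun c => ∑ j, X c j * θ j with hz
  set z' : Fin K → ℝ := fun c => ∑ j, X c j * θ' j with hz'
  have hD : 0 < ∑ c, Real.exp (z c) := denom_pos X θ b
  have hD' : 0 < ∑ c, Real.exp (z' c) := denom_pos X θ' b
  have h1 : Real.exp (z b) ≤ Real.exp δ * Real.exp (z' b) := by
    rw [← Real.exp_add]
    apply Real.exp_le_exp.mpr
    have := (abs_le.mp (hδ b)).1
    linarith
  have h2 : ∑ c, Real.exp (z' c) ≤ Real.exp δ * ∑ c, Real.exp (z c) := by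
    rw [Finset.mul_sum]
    apply Finset.sum_le_sum
    intro c _
    rw [← Real.exp_add]
    apply Real.exp_le_exp.mpr
    have := (abs_le.mp (hδ c)).2
    linarith
  rw [mul_div_assoc', div_le_div_iff₀ hD hD']
  have hid : Real.exp (-(2 * δ)) * Real.exp δ * Real.exp δ = 1 := by
    rw [← Real.exp_add, ← Real.exp_add, show -(2 * δ) + δ + δ = 0 by ring, Real.exp_zero]
  calc Real.exp (-(2 * δ)) * Real.exp (z b) * ∑ c, Real.exp (z' c)
      ≤ Real.exp (-(2 * δ)) * (Real.exp δ * Real.exp (z' b)) *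
          (Real.exp δ * ∑ c, Real.exp (z c)) := by
        gcongr
    _ = (Real.exp (-(2 * δ)) * Real.exp δ * Real.exp δ) *
          (Real.exp (z' b) * ∑ c, Real.exp (z c)) := by ring
    _ = Real.exp (z' b) * ∑ c, Real.exp (z c) := by rw [hid, one_mul]

/-- Along exact `Lin-SPG` with a small enough constant learning rate, for every action `a`
the series `Σ_t (1 − π_{θ_t}(a))` diverges to infinity. -/
theorem exact_linspg_sum_to_infinity {K d : ℕ} (hK : 2 ≤ K) (hd : d ≤ K)
    (X : Matrix (Fin K) (Fin d) ℝ) (r : Fin K → ℝ)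
    (Rmax : ℝ) (hRmax : 0 < Rmax) (hr : ∀ a, |r a| ≤ Rmax)
    (hord : ∀ i j : Fin K, i < j → r j < r i)
    (hw : ∃ w : Fin d → ℝ, ∀ i j : Fin K,
      ((∑ k, X j k * w k) < ∑ k, X i k * w k ↔ r j < r i))
    (η : ℝ) (hη0 : 0 < η) (hη : η < 4 / (9 * Rmax * lamMax X))
    (θ : ℕ → Fin d → ℝ)
    (hupd : ∀ t, θ (t + 1) = θ t + η • pgrad X r (θ t)) :
    ∀ a : Fin K,
      Filter.Tendsto (fun T => ∑ t ∈ Finset.range T, (1 - policy X (θ t) a))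
        Filter.atTop Filter.atTop := by
  
  intro a
  -- abbreviations
  set g : ℕ → ℝ := fun t => 1 - policy X (θ t) a with hg
  -- g is positive
  have hKnt : Nontrivial (Fin K) := by
    apply Fin.nontrivial_iff_two_le.mpr hK
  have hgpos : ∀ t, 0 < g t := by
    intro t
    obtain ⟨b, hb⟩ := exists_ne a
    have h := one_sub_policy X (θ t) a
    have : 0 < ∑ c ∈ Finset.univ.erase a, policy X (θ t) c :=
      Finset.sum_pos (fun c _ => policy_pos X (θ t) c)
        ⟨b, Finset.mem_erase.mpr ⟨hb, Finset.mem_univ b⟩⟩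
    simp only [hg]; linarith
  -- bound on entries of X
  set B : ℝ := (∑ p, ∑ q, |X p q|) + 1 with hB
  have hBpos : 0 < B := by
    have : 0 ≤ ∑ p, ∑ q, |X p q| :=
      Finset.sum_nonneg fun p _ => Finset.sum_nonneg fun q _ => abs_nonneg _
    simp only [hB]; linarith
  have hXB : ∀ (b : Fin K) (j : Fin d), |X b j| ≤ B := by
    intro b j
    have h1 : |X b j| ≤ ∑ q, |X b q| :=
      Finset.single_le_sum (fun q _ => abs_nonneg (X b q)) (Finset.mem_univ j)
    have h2 : (∑ q, |X b q|) ≤ ∑ p, ∑ q, |X p q| :=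
      Finset.single_le_sum (fun p (_ : p ∈ Finset.univ) =>
        Finset.sum_nonneg fun q _ => abs_nonneg (X p q)) (Finset.mem_univ b)
    simp only [hB]; linarith
  set c0 : ℝ := η * (d * (B * (B * (4 * Rmax)))) with hc0
  have hc0nn : 0 ≤ c0 := by
    simp only [hc0]
    have hd0 : (0:ℝ) ≤ d := Nat.cast_nonneg d
    have : (0:ℝ) ≤ B * (B * (4 * Rmax)) := by positivity
    exact mul_nonneg hη0.le (mul_nonneg hd0 this)
  -- gradient bound
  have hgrad : ∀ t j, |pgrad X r (θ t) j| ≤ B * (4 * Rmax * g t) := by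
    intro t j
    have hS := Sbd X r (θ t) Rmax hRmax hr a
    calc |pgrad X r (θ t) j|
        ≤ ∑ b, |X b j * (policy X (θ t) b * (r b - expRwd X r (θ t)))| :=
          Finset.abs_sum_le_sum_abs _ _
      _ ≤ ∑ b, B * (policy X (θ t) b * |r b - expRwd X r (θ t)|) := by
          apply Finset.sum_le_sum
          intro b _
          rw [abs_mul, abs_mul, abs_of_pos (policy_pos X (θ t) b)]
          exact mul_le_mul_of_nonneg_right (hXB b j)
            (mul_nonneg (policy_pos X (θ t) b).le (abs_nonneg _))
      _ = B * ∑ b, policy X (θ t) b * |r b - expRwd X r (θ t)| := by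
          rw [Finset.mul_sum]
      _ ≤ B * (4 * Rmax * g t) := by
          apply mul_le_mul_of_nonneg_left _ hBpos.le
          exact hS
  -- logit step bound
  have hstep : ∀ t (b : Fin K),
      |(∑ j, X b j * θ (t + 1) j) - ∑ j, X b j * θ t j| ≤ c0 * g t := by
    intro t b
    have hθ : ∀ j, θ (t + 1) j = θ t j + η * pgrad X r (θ t) j := by
      intro j; rw [hupd t]; simp [Pi.add_apply]
    have hdiff : (∑ j, X b j * θ (t + 1) j) - ∑ j, X b j * θ t j
        = ∑ j, X b j * (η * pgrad X r (θ t) j) := by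
      rw [← Finset.sum_sub_distrib]
      apply Finset.sum_congr rfl
      intro j _
      rw [hθ j]; ring
    rw [hdiff]
    calc |∑ j, X b j * (η * pgrad X r (θ t) j)|
        ≤ ∑ j, |X b j * (η * pgrad X r (θ t) j)| := Finset.abs_sum_le_sum_abs _ _
      _ ≤ ∑ j : Fin d, B * (η * (B * (4 * Rmax * g t))) := by
          apply Finset.sum_le_sum
          intro j _
          rw [abs_mul, abs_mul, abs_of_pos hη0]
          have h1 := hgrad t j
          have h2 := hXB b j
          have hnn : 0 ≤ η * |pgrad X r (θ t) j| := by positivity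
          calc |X b j| * (η * |pgrad X r (θ t) j|)
              ≤ B * (η * |pgrad X r (θ t) j|) := mul_le_mul_of_nonneg_right h2 hnn
            _ ≤ B * (η * (B * (4 * Rmax * g t))) := by
                apply mul_le_mul_of_nonneg_left _ hBpos.le
                exact mul_le_mul_of_nonneg_left h1 hη0.le
      _ = c0 * g t := by
          rw [Finset.sum_const, Finset.card_univ, Fintype.card_fin, nsmul_eq_mul]
          simp only [hc0]; ring
  -- one-step multiplicative bound on g
  have hmul : ∀ t, Real.exp (-(2 * (c0 * g t))) * g t ≤ g (t + 1) := by
    intro t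
    have h1 : ∀ b : Fin K,
        Real.exp (-(2 * (c0 * g t))) * policy X (θ t) b ≤ policy X (θ (t + 1)) b :=
      fun b => policy_step X (θ t) (θ (t + 1)) (c0 * g t) (hstep t) b
    have h2 := one_sub_policy X (θ t) a
    have h3 := one_sub_policy X (θ (t + 1)) a
    set E := Real.exp (-(2 * (c0 * g t))) with hE
    calc E * g t = ∑ b ∈ Finset.univ.erase a, E * policy X (θ t) b := by
          simp only [hg]; rw [h2, Finset.mul_sum]
      _ ≤ ∑ b ∈ Finset.univ.erase a, policy X (θ (t + 1)) b :=
          Finset.sum_le_sum fun b _ => h1 b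
      _ = g (t + 1) := by simp only [hg]; exact h3.symm
  -- induction: lower bound on g T
  have hind : ∀ T, g 0 * Real.exp (-(2 * c0 * ∑ t ∈ Finset.range T, g t)) ≤ g T := by
    intro T
    induction T with
    | zero => simp
    | succ T ih =>
        have h1 := hmul T
        calc g 0 * Real.exp (-(2 * c0 * ∑ t ∈ Finset.range (T + 1), g t))
            = Real.exp (-(2 * (c0 * g T))) *
                (g 0 * Real.exp (-(2 * c0 * ∑ t ∈ Finset.range T, g t))) := by
              rw [Finset.sum_range_succ]
              rw [show -(2 * c0 * (∑ t ∈ Finset.range T, g t + g T))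
                  = -(2 * (c0 * g T)) + -(2 * c0 * ∑ t ∈ Finset.range T, g t) by ring]
              rw [Real.exp_add]; ring
          _ ≤ Real.exp (-(2 * (c0 * g T))) * g T := by
              apply mul_le_mul_of_nonneg_left ih (Real.exp_pos _).le
          _ ≤ g (T + 1) := h1
  -- conclude
  by_contra hcon
  have hmono : Monotone fun T => ∑ t ∈ Finset.range T, g t := by
    apply monotone_nat_of_le_succ
    intro T
    rw [Finset.sum_range_succ]
    linarith [hgpos T]
  rcases tendsto_of_monotone hmono with h | ⟨l, hl⟩
  · exact hcon h
  · have hfl : ∀ T, (∑ t ∈ Finset.range T, g t) ≤ l := hmono.ge_of_tendsto hl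
    set ε : ℝ := g 0 * Real.exp (-(2 * c0 * l)) with hε
    have hεpos : 0 < ε := by
      simp only [hε]
      exact mul_pos (hgpos 0) (Real.exp_pos _)
    have hglb : ∀ t, ε ≤ g t := by
      intro t
      refine le_trans ?_ (hind t)
      simp only [hε]
      apply mul_le_mul_of_nonneg_left _ (hgpos 0).le
      apply Real.exp_le_exp.mpr
      have := hfl t
      nlinarith [hc0nn]
    obtain ⟨T, hT⟩ := exists_nat_gt (l / ε)
    have hTsum : (T : ℝ) * ε ≤ ∑ t ∈ Finset.range T, g t := by
      calc (T : ℝ) * ε = ∑ _t ∈ Finset.range T, ε := by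
            rw [Finset.sum_const, Finset.card_range, nsmul_eq_mul]
        _ ≤ ∑ t ∈ Finset.range T, g t := Finset.sum_le_sum fun t _ => hglb t
    have : l < (T : ℝ) * ε := by
      rw [div_lt_iff₀ hεpos] at hT
      linarith
    linarith [hfl T]
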